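/- arXiv:1901.03646 — 4 statements merged into one kernel-verified Lean document; each statement's English description precedes it below -/
import Mathlib

section
/- Sup-convolution preserves the subsolution inequality at points of twice differentiability: Let Ω ⊂ ℝⁿ, n ≥ 1, be open, 𝒰 a nonempty open subset of Ω̄ × ℝ × ℝⁿ × Symₙ and F ∈ C⁰(𝒰̄). Let ψ₁ ∈ USC(Ω;ℝ), bounded above, satisfy F(x,J₂[ψ₁]) ≥ 1 in Ω in the viscosity sense. For ε > 0 define the sup-convolution ψ̂_ε(x) := sup_{y∈Ω} ( ψ₁(y) - |x-y|²/ε ). Suppose x ∈ Ω is a point at which ψ̂_ε is punctually second order differentiable with data (∇ψ̂_ε(x), ∇²ψ̂_ε(x)), and x* ∈ Ω is a point realizing the supremum, i.e. ψ̂_ε(x) = ψ₁(x*) - |x - x*|²/ε. Then (x*, ψ̂_ε(x) + |x*-x|²/ε, ∇ψ̂_ε(x), ∇²ψ̂_ε(x)) ∈ 𝒰̄ and F(x*, ψ̂_ε(x) + |x*-x|²/ε, ∇ψ̂_ε(x), ∇²ψ̂_ε(x)) ≥ 1. -/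
open Filter Set Metric Topology Asymptotics MeasureTheory Matrix
open scoped Classical ENNReal NNReal

noncomputable section

abbrev En (n : ℕ) := EuclideanSpace ℝ (Fin n)
abbrev Matn (n : ℕ) := Matrix (Fin n) (Fin n) ℝ

/-- Frobenius norm of a matrix. -/
def frobNorm {n : ℕ} (M : Matn n) : ℝ :=
  Real.sqrt (∑ i, ∑ j, (M i j) ^ 2)

/-- The gradient of `φ` at `x`, as a vector in `ℝⁿ`. -/
def gradVec {n : ℕ} (φ : En n → ℝ) (x : En n) : En n :=
  WithLp.toLp 2 (fun i => fderiv ℝ φ x (EuclideanSpace.single i 1))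

/-- The Hessian matrix of `φ` at `x`. -/
def hessMat {n : ℕ} (φ : En n → ℝ) (x : En n) : Matn n :=
  fun i j => fderiv ℝ (fun y => fderiv ℝ φ y (EuclideanSpace.single j 1)) x
    (EuclideanSpace.single i 1)

/-- `g ∈ C^{1,1}_loc(Ω)`: differentiable with locally Lipschitz gradient. -/
def C11LocOn {n : ℕ} (Ω : Set (En n)) (g : En n → ℝ) : Prop :=
  (∀ x ∈ Ω, DifferentiableAt ℝ g x) ∧
  ∀ x ∈ Ω, ∃ ε > 0, ∃ K : ℝ≥0, LipschitzOnWith K (fun y => fderiv ℝ g y) (ball x ε ∩ Ω)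

/-- `g ∈ C^{1,1}(S)`: differentiable with Lipschitz gradient on `S`. -/
def C11On {n : ℕ} (S : Set (En n)) (g : En n → ℝ) : Prop :=
  DifferentiableOn ℝ g S ∧ ∃ K : ℝ≥0, LipschitzOnWith K (fun y => fderivWithin ℝ g S y) S

/-- `ψ` is punctually second order differentiable at `x` with jet `(ψ x, p, M)`. -/
def HasJet2At {n : ℕ} (ψ : En n → ℝ) (x : En n) (p : En n) (M : Matn n) : Prop :=
  M.IsSymm ∧
  (fun z : En n => ψ (x + z) - ψ x - (∑ i, p i * z i) - (1 / 2) * ∑ i, ∑ j, M i j * z i * z j)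
    =o[𝓝 0] fun z : En n => ‖z‖ ^ 2

/-- The slice `𝒰ₓ`. -/
def Uslice {n : ℕ} (𝒰 : Set (En n × ℝ × En n × Matn n)) (x : En n) :
    Set (ℝ × En n × Matn n) :=
  {t | (x, t.1, t.2.1, t.2.2) ∈ 𝒰}

/-- `𝒰` is a nonempty (relatively) open subset of `Ω̄ × ℝ × ℝⁿ × Symₙ`. -/
def UAdmissible {n : ℕ} (Ω : Set (En n)) (𝒰 : Set (En n × ℝ × En n × Matn n)) : Prop :=
  𝒰.Nonempty ∧ (∀ q ∈ 𝒰, q.1 ∈ closure Ω ∧ (q.2.2.2).IsSymm) ∧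
  ∃ V : Set (En n × ℝ × En n × Matn n), IsOpen V ∧
    𝒰 = V ∩ {q | q.1 ∈ closure Ω ∧ (q.2.2.2).IsSymm}

/-- Condition (i): `(F,𝒰)` is elliptic. -/
def EllipticU {n : ℕ} (𝒰 : Set (En n × ℝ × En n × Matn n))
    (F : En n × ℝ × En n × Matn n → ℝ) : Prop :=
  ∀ x s (p : En n) (M : Matn n), (x, s, p, M) ∈ 𝒰 → ∀ N : Matn n, N.PosSemidef →
    (x, s, p, M + N) ∈ 𝒰 ∧ F (x, s, p, M) ≤ F (x, s, p, M + N)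

/-- Condition (ii): `F < 1` on `∂𝒰ₓ` for all `x ∈ Ω̄`. -/
def SuplevelStrict {n : ℕ} (Ω : Set (En n)) (𝒰 : Set (En n × ℝ × En n × Matn n))
    (F : En n × ℝ × En n × Matn n → ℝ) : Prop :=
  ∀ x ∈ closure Ω, ∀ t ∈ closure (Uslice 𝒰 x), t ∉ Uslice 𝒰 x →
    F (x, t.1, t.2.1, t.2.2) < 1

/-- Condition (ii'): `F ≤ 1` on `∂𝒰ₓ` for all `x ∈ Ω̄`. -/
def SuplevelWeak {n : ℕ} (Ω : Set (En n)) (𝒰 : Set (En n × ℝ × En n × Matn n))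
    (F : En n × ℝ × En n × Matn n → ℝ) : Prop :=
  ∀ x ∈ closure Ω, ∀ t ∈ closure (Uslice 𝒰 x), t ∉ Uslice 𝒰 x →
    F (x, t.1, t.2.1, t.2.2) ≤ 1

/-- Condition (iii): local strict ellipticity. -/
def LocStrictEllU {n : ℕ} (𝒰 : Set (En n × ℝ × En n × Matn n))
    (F : En n × ℝ × En n × Matn n → ℝ) : Prop :=
  ∀ 𝒦 : Set (En n × ℝ × En n × Matn n), 𝒦 ⊆ 𝒰 → IsCompact 𝒦 →
    ∃ δ > 0, ∀ x s (p : En n) (M : Matn n), (x, s, p, M) ∈ 𝒦 → ∀ N : Matn n, N.PosSemidef →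
      δ * frobNorm N ≤ F (x, s, p, M + N) - F (x, s, p, M)

/-- Condition (iv): local Lipschitz continuity in `(s,p,M)`. -/
def LocLipU {n : ℕ} (𝒰 : Set (En n × ℝ × En n × Matn n))
    (F : En n × ℝ × En n × Matn n → ℝ) : Prop :=
  ∀ 𝒦 : Set (En n × ℝ × En n × Matn n), 𝒦 ⊆ 𝒰 → IsCompact 𝒦 →
    ∃ C > 0, ∀ x s (p : En n) (M : Matn n) s' (p' : En n) (M' : Matn n),
      (x, s, p, M) ∈ 𝒦 → (x, s', p', M') ∈ 𝒦 →
      |F (x, s, p, M) - F (x, s', p', M')| ≤ C * (|s - s'| + ‖p - p'‖ + frobNorm (M - M'))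

/-- `F(x, J₂[ψ]) ≥ c` in `Ω` in the viscosity sense. -/
def ViscGe {n : ℕ} (Ω : Set (En n)) (𝒰 : Set (En n × ℝ × En n × Matn n))
    (F : En n × ℝ × En n × Matn n → ℝ) (c : ℝ) (ψ : En n → EReal) : Prop :=
  ∀ x₀ ∈ Ω, ∀ φ : En n → ℝ, ContDiffOn ℝ 2 φ Ω → ψ x₀ = (φ x₀ : EReal) →
    (∀ᶠ x in 𝓝[Ω] x₀, ψ x ≤ (φ x : EReal)) →
    (x₀, φ x₀, gradVec φ x₀, hessMat φ x₀) ∈ closure 𝒰 ∧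
      c ≤ F (x₀, φ x₀, gradVec φ x₀, hessMat φ x₀)

/-- `F(x, J₂[ψ]) ≤ c` in `Ω` in the viscosity sense. -/
def ViscLe {n : ℕ} (Ω : Set (En n)) (𝒰 : Set (En n × ℝ × En n × Matn n))
    (F : En n × ℝ × En n × Matn n → ℝ) (c : ℝ) (ψ : En n → EReal) : Prop :=
  ∀ x₀ ∈ Ω, ∀ φ : En n → ℝ, ContDiffOn ℝ 2 φ Ω → ψ x₀ = (φ x₀ : EReal) →
    (∀ᶠ x in 𝓝[Ω] x₀, (φ x : EReal) ≤ ψ x) →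
    ((x₀, φ x₀, gradVec φ x₀, hessMat φ x₀) ∉ closure 𝒰 ∨
      F (x₀, φ x₀, gradVec φ x₀, hessMat φ x₀) ≤ c)

/-- The eigenvalues of a (symmetric) matrix, listed with multiplicity in
nondecreasing order; junk value `0` if the matrix is not symmetric. -/
def eigs {n : ℕ} (M : Matn n) : En n :=
  if h : M.IsHermitian then WithLp.toLp 2 (fun i => h.eigenvalues (Tuple.sort h.eigenvalues i)) else 0

/-- The conformal Hessian `A^u`. -/
def confHess {n : ℕ} (u : En n → ℝ) (x : En n) : Matn n :=
  fun i j =>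
    -(2 / ((n : ℝ) - 2)) * (u x) ^ (-((n : ℝ) + 2) / ((n : ℝ) - 2)) * hessMat u x i j
    + (2 * (n : ℝ) / ((n : ℝ) - 2) ^ 2) * (u x) ^ (-(2 * (n : ℝ)) / ((n : ℝ) - 2)) *
        (gradVec u x i * gradVec u x j)
    - (2 / ((n : ℝ) - 2) ^ 2) * (u x) ^ (-(2 * (n : ℝ)) / ((n : ℝ) - 2)) *
        (∑ k, (gradVec u x k) ^ 2) * (if i = j then (1 : ℝ) else 0)

/-- Condition (1): `(f,Γ)` is symmetric. -/
def SymmCond {n : ℕ} (Γ : Set (En n)) (f : En n → ℝ) : Prop :=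
  ∀ l ∈ Γ, ∀ σ : Equiv.Perm (Fin n),
    WithLp.toLp 2 (fun i => l (σ i)) ∈ Γ ∧ f (WithLp.toLp 2 (fun i => l (σ i))) = f l

/-- Condition (2): `(f,Γ)` is elliptic. -/
def EllCond {n : ℕ} (Γ : Set (En n)) (f : En n → ℝ) : Prop :=
  ∀ l ∈ Γ, ∀ μ : En n, (∀ i, 0 ≤ μ i) → l + μ ∈ Γ ∧ f l ≤ f (l + μ)

/-- Condition (3): local strict ellipticity. -/
def StrictEllCond {n : ℕ} (Γ : Set (En n)) (f : En n → ℝ) : Prop :=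
  ∀ K : Set (En n), K ⊆ Γ → IsCompact K →
    ∃ δ > 0, ∀ l ∈ K, ∀ μ : En n, (∀ i, 0 ≤ μ i) → δ * ‖μ‖ ≤ f (l + μ) - f l

/-- Condition (4): local Lipschitz continuity. -/
def LipCond {n : ℕ} (Γ : Set (En n)) (f : En n → ℝ) : Prop :=
  ∀ K : Set (En n), K ⊆ Γ → IsCompact K →
    ∃ C > 0, ∀ l ∈ K, ∀ l' ∈ K, |f l - f l'| ≤ C * ‖l - l'‖

/-- Condition (5): the `1`-superlevel set of `f` stays in `Γ`. -/
def LevelCond {n : ℕ} (Γ : Set (En n)) (f : En n → ℝ) : Prop :=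
  {l ∈ closure Γ | 1 ≤ f l} ⊆ Γ

/-- Condition (6): `Γ ⊆ Γ₁`. -/
def TraceCond {n : ℕ} (Γ : Set (En n)) : Prop :=
  ∀ l ∈ Γ, 0 < ∑ i, l i

/-- `u` is a viscosity subsolution of `f(λ(A^u)) = 1` in `Ω`. -/
def ConfViscSub {n : ℕ} (Ω : Set (En n)) (Γ : Set (En n)) (f : En n → ℝ)
    (u : En n → ℝ) : Prop :=
  ∀ x₀ ∈ Ω, ∀ φ : En n → ℝ, ContDiffOn ℝ 2 φ Ω → (∀ x ∈ Ω, 0 < φ x) →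
    φ x₀ = u x₀ → (∀ᶠ x in 𝓝[Ω] x₀, φ x ≤ u x) →
    eigs (confHess φ x₀) ∈ closure Γ ∧ 1 ≤ f (eigs (confHess φ x₀))

/-- `u` is a viscosity supersolution of `f(λ(A^u)) = 1` in `Ω`. -/
def ConfViscSup {n : ℕ} (Ω : Set (En n)) (Γ : Set (En n)) (f : En n → ℝ)
    (u : En n → EReal) : Prop :=
  ∀ x₀ ∈ Ω, ∀ φ : En n → ℝ, ContDiffOn ℝ 2 φ Ω → (∀ x ∈ Ω, 0 < φ x) →
    (φ x₀ : EReal) = u x₀ → (∀ᶠ x in 𝓝[Ω] x₀, u x ≤ (φ x : EReal)) →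
    (eigs (confHess φ x₀) ∉ closure Γ ∨ f (eigs (confHess φ x₀)) ≤ 1)

/-- The Kelvin-type transform `w_{x,λ}`. -/
def kelvin {n : ℕ} (w : En n → ℝ) (x : En n) (l : ℝ) (y : En n) : ℝ :=
  (l ^ (n - 2) / ‖y - x‖ ^ (n - 2)) * w (x + (l ^ 2 / ‖y - x‖ ^ 2) • (y - x))

/-!
Since `ψ̂_ε(x + z) ≥ ψ₁(x* + z) - |x - x*|²/ε`, every quadratic touching `ψ̂_ε` from above at `x`
yields, after translation by `x* - x` and a shift by `|x - x*|²/ε`, a quadratic touching `ψ₁`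
from above at `x*`. Punctual second order differentiability supplies such quadratics with
Hessian `∇²ψ̂_ε(x) + δ I` for every `δ > 0`; the viscosity inequality holds for each of them,
and letting `δ → 0` uses the continuity of `F` on the closed set `𝒰̄`.
-/

theorem IsClosed.mem_and_le_of_tendsto {α X Y : Type*} [TopologicalSpace X] [TopologicalSpace Y]
    [Preorder Y] [ClosedIciTopology Y] {l : Filter α} [l.NeBot] {C : Set X} (hC : IsClosed C)
    {F : X → Y} (hF : ContinuousOn F C) {γ : α → X} {q : X} {c : Y}
    (hγ : Tendsto γ l (𝓝 q)) (h : ∀ᶠ a in l, γ a ∈ C ∧ c ≤ F (γ a)) :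
    q ∈ C ∧ c ≤ F q := by
  have hq : q ∈ C := hC.mem_of_tendsto hγ (h.mono fun _ ha => ha.1)
  have hFγ : Tendsto (F ∘ γ) l (𝓝 (F q)) :=
    (hF q hq).tendsto.comp (tendsto_nhdsWithin_iff.mpr ⟨hγ, h.mono fun _ ha => ha.1⟩)
  exact ⟨hq, ge_of_tendsto hFγ (h.mono fun _ ha => ha.2)⟩

section QuadPoly

variable {n : ℕ}

def quadPoly (m : En n) (s : ℝ) (p : En n) (M : Matn n) (y : En n) : ℝ :=
  s + ∑ i, p i * (y - m) i + 1 / 2 * ∑ i, ∑ j, M i j * (y - m) i * (y - m) j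

theorem quadPoly_add_const (m : En n) (s c : ℝ) (p : En n) (M : Matn n) (y : En n) :
    quadPoly m (s + c) p M y = quadPoly m s p M y + c := by
  unfold quadPoly; ring

theorem quadPoly_sub_add (m m' : En n) (s : ℝ) (p : En n) (M : Matn n) (y : En n) :
    quadPoly m s p M (y - m' + m) = quadPoly m' s p M y := by
  simp only [quadPoly, add_sub_cancel_right]

theorem quadPoly_add_smul_one (m : En n) (s : ℝ) (p : En n) (M : Matn n) (δ : ℝ) (y : En n) :
    quadPoly m s p (M + δ • 1) y = quadPoly m s p M y + δ / 2 * ‖y - m‖ ^ 2 := by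
  simp only [quadPoly, EuclideanSpace.norm_sq_eq, Real.norm_eq_abs, sq_abs, Matrix.add_apply,
    add_mul, Finset.sum_add_distrib]
  simp [Matrix.one_apply, sq, mul_assoc, ← Finset.mul_sum]
  ring

theorem contDiff_quadPoly (m : En n) (s : ℝ) (p : En n) (M : Matn n) :
    ContDiff ℝ 2 (quadPoly m s p M) := by
  unfold quadPoly; fun_prop

theorem fderiv_ofLp_apply (i : Fin n) (y v : En n) :
    fderiv ℝ (fun y : En n => y i) y v = v i := by
  rw [(PiLp.hasFDerivAt_apply 2 y i).fderiv, PiLp.proj_apply]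

theorem fderiv_quadPoly_apply (m : En n) (s : ℝ) (p : En n) (M : Matn n) (y v : En n) :
    fderiv ℝ (quadPoly m s p M) y v =
      ∑ i, p i * v i + 1 / 2 * ∑ i, ∑ j, M i j * (v i * (y - m) j + (y - m) i * v j) := by
  unfold quadPoly
  simp (disch := fun_prop) only [fderiv_fun_add, fderiv_fun_sum, fderiv_const_mul,
    fderiv_fun_mul, fderiv_sub_const, fderiv_const_apply, PiLp.sub_apply]
  simp only [_root_.add_apply, _root_.sum_apply, _root_.smul_apply, fderiv_ofLp_apply,
    smul_eq_mul, zero_add]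
  congr 2
  exact Finset.sum_congr rfl fun i _ => Finset.sum_congr rfl fun j _ => by ring

theorem gradVec_quadPoly (m : En n) (s : ℝ) (p : En n) (M : Matn n) :
    gradVec (quadPoly m s p M) m = p := by
  ext j
  simp [gradVec, fderiv_quadPoly_apply, PiLp.single_apply]

theorem hessMat_quadPoly (m : En n) (s : ℝ) (p : En n) {M : Matn n} (hM : M.IsSymm) :
    hessMat (quadPoly m s p M) m = M := by
  ext i j
  simp (disch := fun_prop) only [hessMat, fderiv_quadPoly_apply, fderiv_fun_add, fderiv_fun_sum,
    fderiv_const_mul, fderiv_fun_mul, fderiv_sub_const, fderiv_const_apply, PiLp.sub_apply]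
  simp [fderiv_ofLp_apply, PiLp.single_apply, Finset.sum_add_distrib, hM.apply i j]
  ring

theorem HasJet2At.eventually_le_quadPoly {ψ : En n → ℝ} {x p : En n} {M : Matn n}
    (h : HasJet2At ψ x p M) {δ : ℝ} (hδ : 0 < δ) :
    ∀ᶠ y in 𝓝 x, ψ y ≤ quadPoly x (ψ x) p (M + δ • 1) y := by
  have hshift : Tendsto (fun y => y - x) (𝓝 x) (𝓝 0) :=
    (continuous_sub_right x).tendsto' x 0 (sub_self x)
  filter_upwards [hshift.eventually (h.2.bound (half_pos hδ))] with y hy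
  rw [add_sub_cancel] at hy
  rw [quadPoly_add_smul_one]
  simp only [Real.norm_eq_abs, abs_of_nonneg (sq_nonneg ‖y - x‖)] at hy
  have := (abs_le.mp hy).2
  simp only [quadPoly]
  linarith

theorem ViscGe.mem_closure_and_le_of_le_quadPoly {Ω : Set (En n)}
    {𝒰 : Set (En n × ℝ × En n × Matn n)} {F : En n × ℝ × En n × Matn n → ℝ} {c : ℝ}
    {ψ : En n → ℝ} (hψ : ViscGe Ω 𝒰 F c (fun y => (ψ y : EReal))) {x₀ : En n} (hx₀ : x₀ ∈ Ω)
    {s : ℝ} {p : En n} {M : Matn n} (hM : M.IsSymm) (hs : ψ x₀ = s)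
    (hle : ∀ᶠ y in 𝓝[Ω] x₀, ψ y ≤ quadPoly x₀ s p M y) :
    (x₀, s, p, M) ∈ closure 𝒰 ∧ c ≤ F (x₀, s, p, M) := by
  have hval : quadPoly x₀ s p M x₀ = s := by simp [quadPoly]
  have := hψ x₀ hx₀ (quadPoly x₀ s p M) (contDiff_quadPoly x₀ s p M).contDiffOn
    (by simp [hval, hs]) (hle.mono fun y hy => EReal.coe_le_coe hy)
  rwa [hval, gradVec_quadPoly, hessMat_quadPoly x₀ s p hM] at this

end QuadPoly

section SupConv

variable {n : ℕ}

def supConv (Ω : Set (En n)) (ψ : En n → ℝ) (ε : ℝ) (x : En n) : ℝ :=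
  sSup {v : ℝ | ∃ y ∈ Ω, v = ψ y - ‖x - y‖ ^ 2 / ε}

variable {Ω : Set (En n)} {ψ : En n → ℝ} {ε : ℝ}

theorem sub_le_supConv (hψ : BddAbove (ψ '' Ω)) (hε : 0 ≤ ε) (x : En n) {y : En n}
    (hy : y ∈ Ω) : ψ y - ‖x - y‖ ^ 2 / ε ≤ supConv Ω ψ ε x := by
  obtain ⟨C, hC⟩ := hψ
  refine le_csSup ⟨C, ?_⟩ ⟨y, hy, rfl⟩
  rintro _ ⟨y', hy', rfl⟩
  have : 0 ≤ ‖x - y'‖ ^ 2 / ε := by positivity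
  linarith [hC ⟨y', hy', rfl⟩]

theorem eventually_le_of_eventually_supConv_le (hψ : BddAbove (ψ '' Ω)) (hε : 0 ≤ ε)
    {x x' : En n} {φ : En n → ℝ} (hφ : ∀ᶠ y in 𝓝 x, supConv Ω ψ ε y ≤ φ y) :
    ∀ᶠ y in 𝓝[Ω] x', ψ y ≤ φ (y - x' + x) + ‖x - x'‖ ^ 2 / ε := by
  have htranslate : Tendsto (fun y => y - x' + x) (𝓝 x') (𝓝 x) :=
    ((continuous_sub_right x').add continuous_const).tendsto' x' x (by simp)
  filter_upwards [nhdsWithin_le_nhds (htranslate.eventually hφ), self_mem_nhdsWithin]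
    with y hφy hy
  have := sub_le_supConv hψ hε (y - x' + x) hy
  rw [show y - x' + x - y = x - x' by abel] at this
  linarith

end SupConv

theorem supconvolution_subsolution_general {n : ℕ}
    (Ω : Set (En n))
    (𝒰 : Set (En n × ℝ × En n × Matn n))
    (F : En n × ℝ × En n × Matn n → ℝ) (hFc : ContinuousOn F (closure 𝒰))
    (ψ₁ : En n → ℝ)
    (hψ₁bdd : BddAbove (ψ₁ '' Ω))
    (hsub : ViscGe Ω 𝒰 F 1 (fun x => (ψ₁ x : EReal)))
    (ε : ℝ) (hε : 0 < ε)
    (ψhat : En n → ℝ)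
    (hhat : ∀ x, ψhat x = sSup {v : ℝ | ∃ y ∈ Ω, v = ψ₁ y - ‖x - y‖ ^ 2 / ε})
    (x : En n)
    (p : En n) (M : Matn n) (hjet : HasJet2At ψhat x p M)
    (xstar : En n) (hxstar : xstar ∈ Ω)
    (hrealize : ψhat x = ψ₁ xstar - ‖x - xstar‖ ^ 2 / ε) :
    (xstar, ψhat x + ‖xstar - x‖ ^ 2 / ε, p, M) ∈ closure 𝒰 ∧
      1 ≤ F (xstar, ψhat x + ‖xstar - x‖ ^ 2 / ε, p, M) := by
  obtain rfl : ψhat = supConv Ω ψ₁ ε := funext hhat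
  rw [norm_sub_rev xstar x]
  set s := supConv Ω ψ₁ ε x + ‖x - xstar‖ ^ 2 / ε
  have hperturbed : ∀ δ : ℝ, 0 < δ →
      (xstar, s, p, M + δ • 1) ∈ closure 𝒰 ∧ 1 ≤ F (xstar, s, p, M + δ • 1) := by
    intro δ hδ
    refine hsub.mem_closure_and_le_of_le_quadPoly hxstar (hjet.1.add (isSymm_one.smul δ))
      (by linarith) ?_
    filter_upwards [eventually_le_of_eventually_supConv_le hψ₁bdd hε.le
      (hjet.eventually_le_quadPoly hδ)] with y hy
    rwa [quadPoly_sub_add, ← quadPoly_add_const] at hy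
  have hpath : Continuous fun δ : ℝ => (xstar, s, p, M + δ • (1 : Matn n)) := by fun_prop
  exact isClosed_closure.mem_and_le_of_tendsto hFc
    ((hpath.tendsto' 0 _ (by simp)).mono_left nhdsWithin_le_nhds)
    (eventually_nhdsWithin_of_forall (s := Ioi 0) hperturbed)

/-- Sup-convolution preserves the subsolution inequality at points of
punctual second order differentiability. -/
theorem supconvolution_subsolution {n : ℕ} (hn : 1 ≤ n)
    (Ω : Set (En n)) (hΩo : IsOpen Ω)
    (𝒰 : Set (En n × ℝ × En n × Matn n)) (h𝒰 : UAdmissible Ω 𝒰)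
    (F : En n × ℝ × En n × Matn n → ℝ) (hFc : ContinuousOn F (closure 𝒰))
    (ψ₁ : En n → ℝ)
    (hψ₁usc : UpperSemicontinuousOn ψ₁ Ω) (hψ₁bdd : BddAbove (ψ₁ '' Ω))
    (hsub : ViscGe Ω 𝒰 F 1 (fun x => (ψ₁ x : EReal)))
    (ε : ℝ) (hε : 0 < ε)
    (ψhat : En n → ℝ)
    (hhat : ∀ x, ψhat x = sSup {v : ℝ | ∃ y ∈ Ω, v = ψ₁ y - ‖x - y‖ ^ 2 / ε})
    (x : En n) (hx : x ∈ Ω)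
    (p : En n) (M : Matn n) (hjet : HasJet2At ψhat x p M)
    (xstar : En n) (hxstar : xstar ∈ Ω)
    (hrealize : ψhat x = ψ₁ xstar - ‖x - xstar‖ ^ 2 / ε) :
    (xstar, ψhat x + ‖xstar - x‖ ^ 2 / ε, p, M) ∈ closure 𝒰 ∧
      1 ≤ F (xstar, ψhat x + ‖xstar - x‖ ^ 2 / ε, p, M) :=
  supconvolution_subsolution_general Ω 𝒰 F hFc ψ₁ hψ₁bdd hsub ε hε ψhat hhat x p M hjet xstar hxstar
    hrealize
end
end

section
/- Local strict ellipticity transfers from the symmetric function to the matrix operator: Let Γ ⊂ ℝⁿ be a nonempty open set and f ∈ C⁰(Γ̄) satisfy the symmetry condition (1), the ellipticity condition (2) and the local strict ellipticity condition (3). Define U := {M ∈ Symₙ : λ(M) ∈ Γ} and F(M) := f(λ(M)). Then for every compact subset K of U there is a constant δ(K) > 0 such that F(M+N) - F(M) ≥ δ(K)|N| for all M ∈ K and all positive semidefinite N ∈ Symₙ, where |N| denotes the Frobenius norm. -/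
open Filter Set Metric Topology Asymptotics MeasureTheory Matrix
open scoped Classical ENNReal NNReal

noncomputable section

/-! Weyl's inequalities for sorted eigenvalues, proved by the Courant–Fischer dimension count,
say that `λ` is monotone under positive semidefinite perturbations and that each `λₖ` is
`1`-Lipschitz for the Frobenius norm. Hence `λ(K)` is a compact subset of `Γ`, and for `N ≥ 0`
the increment `μ = λ(M + N) - λ(M)` lies in `Γ̄ₙ` with `|N| ≤ tr N = ∑ μᵢ ≤ √n |μ|`; condition (3)
on `λ(K)` gives the claim with `δ(K) = δ(λ(K)) / √n`. -/

open scoped RealInnerProductSpace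

theorem Submodule.inf_ne_bot_of_finrank_lt_add {K V : Type*} [DivisionRing K] [AddCommGroup V]
    [Module K V] [FiniteDimensional K V] {W₁ W₂ : Submodule K V}
    (h : Module.finrank K V < Module.finrank K W₁ + Module.finrank K W₂) : W₁ ⊓ W₂ ≠ ⊥ := by
  intro hbot
  have hsum := Submodule.finrank_sup_add_finrank_inf_eq W₁ W₂
  rw [hbot, finrank_bot] at hsum
  have := Submodule.finrank_le (W₁ ⊔ W₂)
  omega

theorem EuclideanSpace.sum_le_sqrt_card_mul_norm {ι : Type*} [Fintype ι]
    (x : EuclideanSpace ℝ ι) : ∑ i, x i ≤ √(Fintype.card ι) * ‖x‖ := by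
  rw [EuclideanSpace.norm_eq, ← Real.sqrt_mul (Nat.cast_nonneg _)]
  refine Real.le_sqrt_of_sq_le ?_
  simpa [Real.norm_eq_abs, sq_abs] using sq_sum_le_card_mul_sum_sq (s := Finset.univ) (f := x)

namespace OrthonormalBasis

section RCLike

variable {𝕜 F ι : Type*} [RCLike 𝕜] [NormedAddCommGroup F] [InnerProductSpace 𝕜 F] [Fintype ι]

theorem repr_eq_zero_of_mem_span (b : OrthonormalBasis ι 𝕜 F) {s : Set ι} {x : F}
    (hx : x ∈ Submodule.span 𝕜 (b '' s)) {j : ι} (hj : j ∉ s) : b.repr x j = 0 := by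
  classical
  induction hx using Submodule.span_induction with
  | mem y hy =>
    obtain ⟨i, hi, rfl⟩ := hy
    simp [b.repr_self, ne_of_mem_of_not_mem hi hj |>.symm]
  | zero => simp
  | add y z _ _ hy hz => simp [hy, hz]
  | smul a y _ hy => simp [hy]

theorem finrank_span_image_finset (b : OrthonormalBasis ι 𝕜 F) (s : Finset ι) :
    Module.finrank 𝕜 (Submodule.span 𝕜 (b '' s)) = s.card := by
  have hli : LinearIndependent 𝕜 (fun i : (s : Set ι) => b i) :=
    b.orthonormal.linearIndependent.comp _ Subtype.val_injective
  rw [Set.image_eq_range, finrank_span_eq_card hli]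
  simp

end RCLike

variable {E : Type*} [NormedAddCommGroup E] [InnerProductSpace ℝ E] {T S : E →ₗ[ℝ] E}

theorem inner_map_self_eq_sum {ι : Type*} [Fintype ι] {ev : ι → ℝ}
    (b : OrthonormalBasis ι ℝ E) (hT : ∀ i, T (b i) = ev i • b i) (x : E) :
    ⟪T x, x⟫ = ∑ i, ev i * b.repr x i ^ 2 := by
  have hTx : T x = ∑ i, (ev i * b.repr x i) • b i := by
    conv_lhs => rw [← b.sum_repr x]
    simp [hT, smul_smul, mul_comm]
  simp [hTx, sum_inner, real_inner_smul_left, b.repr_apply_apply, sq, mul_assoc]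

variable {n : ℕ} {ev ev' : Fin n → ℝ}

theorem mul_norm_sq_le_inner_map_self_of_mem_span_Ici (b : OrthonormalBasis (Fin n) ℝ E)
    (hT : ∀ i, T (b i) = ev i • b i) (hev : Monotone ev) (k : Fin n) {x : E}
    (hx : x ∈ Submodule.span ℝ (b '' Set.Ici k)) : ev k * ‖x‖ ^ 2 ≤ ⟪T x, x⟫ := by
  rw [b.inner_map_self_eq_sum hT, ← b.repr.norm_map, EuclideanSpace.norm_sq_eq, Finset.mul_sum]
  refine Finset.sum_le_sum fun i _ => ?_
  by_cases hki : k ≤ i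
  · rw [Real.norm_eq_abs, sq_abs]
    exact mul_le_mul_of_nonneg_right (hev hki) (sq_nonneg _)
  · simp [b.repr_eq_zero_of_mem_span hx (s := Set.Ici k) hki]

theorem inner_map_self_le_mul_norm_sq_of_mem_span_Iic (b : OrthonormalBasis (Fin n) ℝ E)
    (hT : ∀ i, T (b i) = ev i • b i) (hev : Monotone ev) (k : Fin n) {x : E}
    (hx : x ∈ Submodule.span ℝ (b '' Set.Iic k)) : ⟪T x, x⟫ ≤ ev k * ‖x‖ ^ 2 := by
  rw [b.inner_map_self_eq_sum hT, ← b.repr.norm_map, EuclideanSpace.norm_sq_eq, Finset.mul_sum]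
  refine Finset.sum_le_sum fun i _ => ?_
  by_cases hik : i ≤ k
  · rw [Real.norm_eq_abs, sq_abs]
    exact mul_le_mul_of_nonneg_right (hev hik) (sq_nonneg _)
  · simp [b.repr_eq_zero_of_mem_span hx (s := Set.Iic k) hik]

/-- Courant–Fischer: by a dimension count some `x ≠ 0` lies in both `span {bT i | k ≤ i}` and
`span {bS i | i ≤ k}`, and there `ev k ‖x‖² ≤ ⟪T x, x⟫` and `⟪S x, x⟫ ≤ ev' k ‖x‖²`. -/
theorem eigenvalue_le_add_of_inner_map_self_le (bT bS : OrthonormalBasis (Fin n) ℝ E)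
    (hT : ∀ i, T (bT i) = ev i • bT i) (hS : ∀ i, S (bS i) = ev' i • bS i)
    (hev : Monotone ev) (hev' : Monotone ev') {c : ℝ}
    (h : ∀ x, ⟪T x, x⟫ ≤ ⟪S x, x⟫ + c * ‖x‖ ^ 2) (k : Fin n) : ev k ≤ ev' k + c := by
  have := bT.toBasis.finiteDimensional_of_finite
  have hdim : Module.finrank ℝ E < Module.finrank ℝ (Submodule.span ℝ (bT '' Set.Ici k)) +
      Module.finrank ℝ (Submodule.span ℝ (bS '' Set.Iic k)) := by
    rw [← Finset.coe_Ici, ← Finset.coe_Iic, bT.finrank_span_image_finset,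
      bS.finrank_span_image_finset, Fin.card_Ici, Fin.card_Iic,
      Module.finrank_eq_card_basis bT.toBasis, Fintype.card_fin]
    omega
  obtain ⟨x, ⟨hxT, hxS⟩, hx⟩ :=
    (Submodule.ne_bot_iff _).1 (Submodule.inf_ne_bot_of_finrank_lt_add hdim)
  have hlow := bT.mul_norm_sq_le_inner_map_self_of_mem_span_Ici hT hev k hxT
  have hup := bS.inner_map_self_le_mul_norm_sq_of_mem_span_Iic hS hev' k hxS
  have hxpos : 0 < ‖x‖ ^ 2 := by positivity
  refine le_of_mul_le_mul_right ?_ hxpos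
  linarith [h x]

end OrthonormalBasis

section Eigs

variable {n : ℕ}

theorem eigs_apply {M : Matn n} (hM : M.IsHermitian) (i : Fin n) :
    eigs M i = hM.eigenvalues (Tuple.sort hM.eigenvalues i) := by
  rw [eigs, dif_pos hM]

theorem monotone_eigs {M : Matn n} (hM : M.IsHermitian) : Monotone (eigs M) := fun i j hij => by
  rw [eigs_apply hM, eigs_apply hM]
  exact Tuple.monotone_sort hM.eigenvalues hij

def Matrix.IsHermitian.sortedEigenbasis {M : Matn n} (hM : M.IsHermitian) :
    OrthonormalBasis (Fin n) ℝ (En n) :=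
  hM.eigenvectorBasis.reindex (Tuple.sort hM.eigenvalues).symm

theorem Matrix.IsHermitian.toEuclideanLin_sortedEigenbasis {M : Matn n} (hM : M.IsHermitian)
    (i : Fin n) : toEuclideanLin M (hM.sortedEigenbasis i) = eigs M i • hM.sortedEigenbasis i := by
  apply (WithLp.equiv 2 (Fin n → ℝ)).injective
  simpa [sortedEigenbasis, eigs_apply hM] using
    hM.mulVec_eigenvectorBasis (Tuple.sort hM.eigenvalues i)

theorem eigs_le_eigs_add_of_inner_le {A B : Matn n} (hA : A.IsHermitian) (hB : B.IsHermitian)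
    {c : ℝ} (h : ∀ x, ⟪toEuclideanLin A x, x⟫ ≤ ⟪toEuclideanLin B x, x⟫ + c * ‖x‖ ^ 2)
    (k : Fin n) : eigs A k ≤ eigs B k + c :=
  OrthonormalBasis.eigenvalue_le_add_of_inner_map_self_le hA.sortedEigenbasis hB.sortedEigenbasis
    hA.toEuclideanLin_sortedEigenbasis hB.toEuclideanLin_sortedEigenbasis
    (monotone_eigs hA) (monotone_eigs hB) h k

theorem eigs_le_eigs_add_of_posSemidef {M N : Matn n} (hM : M.IsHermitian) (hN : N.PosSemidef)
    (k : Fin n) : eigs M k ≤ eigs (M + N) k := by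
  simpa using eigs_le_eigs_add_of_inner_le hM (hM.add hN.1) (c := 0) (fun x => by
    have := (isPositive_toEuclideanLin_iff.2 hN).2 x
    simp only [map_add, LinearMap.add_apply, inner_add_left, zero_mul, add_zero]
    simpa using this) k

theorem norm_toEuclideanLin_le_frobNorm_mul (A : Matn n) (x : En n) :
    ‖toEuclideanLin A x‖ ≤ frobNorm A * ‖x‖ := by
  rw [EuclideanSpace.norm_eq, EuclideanSpace.norm_eq, frobNorm, ← Real.sqrt_mul (by positivity),
    Finset.sum_mul]
  gcongr with i
  simpa [Real.norm_eq_abs, sq_abs, mulVec, dotProduct] using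
    Finset.sum_mul_sq_le_sq_mul_sq Finset.univ (A i) x

theorem inner_toEuclideanLin_self_le_frobNorm_mul (A : Matn n) (x : En n) :
    ⟪toEuclideanLin A x, x⟫ ≤ frobNorm A * ‖x‖ ^ 2 := by
  calc ⟪toEuclideanLin A x, x⟫ ≤ ‖toEuclideanLin A x‖ * ‖x‖ := real_inner_le_norm _ _
    _ ≤ frobNorm A * ‖x‖ * ‖x‖ := by gcongr; exact norm_toEuclideanLin_le_frobNorm_mul A x
    _ = frobNorm A * ‖x‖ ^ 2 := by ring

theorem eigs_le_eigs_add_frobNorm_sub {A B : Matn n} (hA : A.IsHermitian) (hB : B.IsHermitian)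
    (k : Fin n) : eigs A k ≤ eigs B k + frobNorm (A - B) :=
  eigs_le_eigs_add_of_inner_le hA hB (fun x => by
    have := inner_toEuclideanLin_self_le_frobNorm_mul (A - B) x
    rw [map_sub, LinearMap.sub_apply, inner_sub_left] at this
    linarith) k

theorem frobNorm_sub_comm (A B : Matn n) : frobNorm (A - B) = frobNorm (B - A) := by
  simp only [frobNorm, ← neg_sub B A, Matrix.neg_apply, neg_sq]

theorem abs_eigs_sub_eigs_le_frobNorm {A B : Matn n} (hA : A.IsHermitian) (hB : B.IsHermitian)
    (k : Fin n) : |eigs A k - eigs B k| ≤ frobNorm (A - B) := by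
  have h₁ := eigs_le_eigs_add_frobNorm_sub hA hB k
  have h₂ := eigs_le_eigs_add_frobNorm_sub hB hA k
  rw [frobNorm_sub_comm] at h₂
  exact abs_sub_le_iff.2 ⟨by linarith, by linarith⟩

theorem continuous_frobNorm : Continuous (frobNorm : Matn n → ℝ) := by
  unfold frobNorm
  fun_prop

theorem continuousOn_eigs : ContinuousOn (eigs : Matn n → En n) {M | M.IsSymm} := by
  have hcoord : ∀ k, ContinuousOn (fun M => eigs M k) {M : Matn n | M.IsSymm} := by
    intro k M hM
    have hlim : Tendsto (fun A : Matn n => frobNorm (A - M)) (𝓝[{M | M.IsSymm}] M) (𝓝 0) := by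
      have hcont : Continuous fun A : Matn n => frobNorm (A - M) :=
        continuous_frobNorm.comp (continuous_id.sub continuous_const)
      simpa [frobNorm] using (hcont.tendsto M).mono_left nhdsWithin_le_nhds
    rw [ContinuousWithinAt, tendsto_iff_dist_tendsto_zero]
    refine squeeze_zero' (.of_forall fun _ => dist_nonneg) ?_ hlim
    filter_upwards [self_mem_nhdsWithin] with A hA
    exact abs_eigs_sub_eigs_le_frobNorm (isHermitian_iff_isSymm.2 hA)
      (isHermitian_iff_isSymm.2 hM) k
  exact (PiLp.continuous_toLp 2 _).comp_continuousOn (continuousOn_pi.2 hcoord)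

theorem sum_eigs {M : Matn n} (hM : M.IsHermitian) : ∑ i, eigs M i = M.trace := by
  rw [hM.trace_eq_sum_eigenvalues]
  simp only [eigs_apply hM, RCLike.ofReal_real_eq_id, id]
  exact Equiv.sum_comp (Tuple.sort hM.eigenvalues) _

theorem Matrix.PosSemidef.sq_apply_le_mul_diag {ι : Type*} [Fintype ι] [DecidableEq ι]
    {N : Matrix ι ι ℝ} (hN : N.PosSemidef) (i j : ι) : N i j ^ 2 ≤ N i i * N j j := by
  have hsymm : N j i = N i j := by simpa using hN.1.apply i j
  have hquad : ∀ t : ℝ, 0 ≤ N i i * (t * t) + 2 * N i j * t + N j j := by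
    intro t
    have := hN.dotProduct_mulVec_nonneg (Pi.single i t + Pi.single j 1)
    simp [mulVec_add, dotProduct_add, add_dotProduct, hsymm] at this
    linarith
  have := discrim_le_zero hquad
  rw [discrim] at this
  linarith

theorem frobNorm_le_trace {N : Matn n} (hN : N.PosSemidef) : frobNorm N ≤ N.trace := by
  refine Real.sqrt_le_iff.2 ⟨hN.trace_nonneg, ?_⟩
  calc ∑ i, ∑ j, N i j ^ 2 ≤ ∑ i, ∑ j, N i i * N j j := by
        gcongr with i _ j; exact hN.sq_apply_le_mul_diag i j
    _ = N.trace ^ 2 := by rw [trace, sq, Finset.sum_mul_sum]; rfl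

theorem frobNorm_le_sqrt_mul_norm_eigs_add_sub {M N : Matn n} (hM : M.IsHermitian)
    (hN : N.PosSemidef) : frobNorm N ≤ √n * ‖eigs (M + N) - eigs M‖ :=
  calc frobNorm N ≤ N.trace := frobNorm_le_trace hN
    _ = ∑ i, (eigs (M + N) - eigs M) i := by
      simp [Finset.sum_sub_distrib, sum_eigs hM, sum_eigs (hM.add hN.1), trace_add]
    _ ≤ √n * ‖eigs (M + N) - eigs M‖ := by
      simpa using EuclideanSpace.sum_le_sqrt_card_mul_norm (eigs (M + N) - eigs M)

end Eigs

theorem local_strict_ellipticity_transfer_to_matrices_general {n : ℕ} (hn : 1 ≤ n)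
    (Γ : Set (En n)) (f : En n → ℝ) (h3 : StrictEllCond Γ f) :
    ∀ K : Set (Matn n), K ⊆ {M : Matn n | M.IsSymm ∧ eigs M ∈ Γ} → IsCompact K →
      ∃ δ > 0, ∀ M ∈ K, ∀ N : Matn n, N.PosSemidef →
        δ * frobNorm N ≤ f (eigs (M + N)) - f (eigs M) := by
  intro K hKU hK
  have hKsymm : K ⊆ {M | M.IsSymm} := fun M hM => (hKU hM).1
  obtain ⟨δ₀, hδ₀, hδ₀K⟩ := h3 (eigs '' K) (image_subset_iff.2 fun M hM => (hKU hM).2)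
    (hK.image_of_continuousOn (continuousOn_eigs.mono hKsymm))
  have hsqrt : 0 < √(n : ℝ) := Real.sqrt_pos.2 (by exact_mod_cast hn)
  refine ⟨δ₀ / √n, by positivity, fun M hM N hN => ?_⟩
  have hMh : M.IsHermitian := isHermitian_iff_isSymm.2 (hKsymm hM)
  have hgap := hδ₀K (eigs M) (mem_image_of_mem _ hM) (eigs (M + N) - eigs M)
    fun i => sub_nonneg.2 (eigs_le_eigs_add_of_posSemidef hMh hN i)
  rw [add_sub_cancel] at hgap
  calc δ₀ / √n * frobNorm N ≤ δ₀ / √n * (√n * ‖eigs (M + N) - eigs M‖) := by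
        gcongr; exact frobNorm_le_sqrt_mul_norm_eigs_add_sub hMh hN
    _ = δ₀ * ‖eigs (M + N) - eigs M‖ := by field_simp
    _ ≤ f (eigs (M + N)) - f (eigs M) := hgap

/-- Local strict ellipticity transfers from `f` to the matrix operator
`F(M) = f(λ(M))` on `U = {M ∈ Symₙ : λ(M) ∈ Γ}`. -/
theorem local_strict_ellipticity_transfer_to_matrices {n : ℕ} (hn : 1 ≤ n)
    (Γ : Set (En n)) (hΓne : Γ.Nonempty) (hΓo : IsOpen Γ)
    (f : En n → ℝ) (hfc : ContinuousOn f (closure Γ))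
    (h1 : SymmCond Γ f) (h2 : EllCond Γ f) (h3 : StrictEllCond Γ f) :
    ∀ K : Set (Matn n), K ⊆ {M : Matn n | M.IsSymm ∧ eigs M ∈ Γ} → IsCompact K →
      ∃ δ > 0, ∀ M ∈ K, ∀ N : Matn n, N.PosSemidef →
        δ * frobNorm N ≤ f (eigs (M + N)) - f (eigs M) :=
  local_strict_ellipticity_transfer_to_matrices_general hn Γ f h3
end
end

section
/- Monotonicity along rays from the moving sphere inequality: Let n ≥ 3, let v : ℝⁿ → (0,∞), and let x₀ ∈ ℝⁿ. Suppose that for every λ > 0 and every y with |y - x₀| ≥ λ one has v_{x₀,λ}(y) ≤ v(y). Then for every unit vector e ∈ ℝⁿ, the function r ↦ r^{(n-2)/2} v(x₀ + re) is nondecreasing on (0,∞); that is, for all 0 < r₁ ≤ r₂, r₁^{(n-2)/2} v(x₀ + r₁ e) ≤ r₂^{(n-2)/2} v(x₀ + r₂ e). -/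
open Filter Set Metric Topology Asymptotics MeasureTheory Matrix
open scoped Classical ENNReal NNReal

noncomputable section

lemma norm_add_smul_sub_self {E : Type*} [SeminormedAddCommGroup E] [NormedSpace ℝ E]
    (x e : E) (he : ‖e‖ = 1) {r : ℝ} (hr : 0 ≤ r) :
    ‖x + r • e - x‖ = r := by
  rw [add_sub_cancel_left, norm_smul, he, mul_one, Real.norm_of_nonneg hr]

/-- Inversion in the sphere of radius `√(s r)` about `x` exchanges the points at distances `s`
and `r` on each ray from `x`. -/
lemma kelvin_sqrt_mul_add_smul {n : ℕ} (w : En n → ℝ) (x e : En n) (he : ‖e‖ = 1)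
    {s r : ℝ} (hs : 0 ≤ s) (hr : 0 < r) :
    kelvin w x √(s * r) (x + r • e) = √(s / r) ^ (n - 2) * w (x + s • e) := by
  have hradius : √(s * r) / r = √(s / r) := by
    rw [Real.sqrt_div' s hr.le, Real.sqrt_mul' s hr.le, mul_div_assoc, Real.sqrt_div_self,
      div_eq_mul_inv]
  rw [kelvin, norm_add_smul_sub_self x e he hr.le, add_sub_cancel_left, smul_smul,
    Real.sq_sqrt (mul_nonneg hs hr.le), ← div_pow, hradius]
  field_simp

theorem moving_sphere_monotonicity_general {n : ℕ} (hn : 3 ≤ n)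
    (v : En n → ℝ) (x₀ : En n)
    (hms : ∀ l : ℝ, 0 < l → ∀ y : En n, l ≤ ‖y - x₀‖ → kelvin v x₀ l y ≤ v y) :
    ∀ e : En n, ‖e‖ = 1 → ∀ r₁ r₂ : ℝ, 0 < r₁ → r₁ ≤ r₂ →
      r₁ ^ (((n : ℝ) - 2) / 2) * v (x₀ + r₁ • e) ≤
        r₂ ^ (((n : ℝ) - 2) / 2) * v (x₀ + r₂ • e) := by
  intro e he r₁ r₂ hr₁ hle
  have hr₂ : 0 < r₂ := hr₁.trans_le hle
  have hsphere : √(r₁ * r₂) ≤ ‖x₀ + r₂ • e - x₀‖ := by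
    rw [norm_add_smul_sub_self x₀ e he hr₂.le, Real.sqrt_le_left hr₂.le, sq]
    exact mul_le_mul_of_nonneg_right hle hr₂.le
  have h := hms √(r₁ * r₂) (Real.sqrt_pos.2 (mul_pos hr₁ hr₂)) (x₀ + r₂ • e) hsphere
  rw [kelvin_sqrt_mul_add_smul v x₀ e he hr₁.le hr₂, ← Real.rpow_natCast,
    ← Real.rpow_div_two_eq_sqrt _ (by positivity),
    Nat.cast_sub (by omega), Nat.cast_ofNat, Real.div_rpow hr₁.le hr₂.le, div_mul_eq_mul_div,
    div_le_iff₀ (Real.rpow_pos_of_pos hr₂ _)] at h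
  linarith

/-- Monotonicity along rays from the moving sphere inequality. -/
theorem moving_sphere_monotonicity {n : ℕ} (hn : 3 ≤ n)
    (v : En n → ℝ) (hvpos : ∀ y, 0 < v y) (x₀ : En n)
    (hms : ∀ l : ℝ, 0 < l → ∀ y : En n, l ≤ ‖y - x₀‖ → kelvin v x₀ l y ≤ v y) :
    ∀ e : En n, ‖e‖ = 1 → ∀ r₁ r₂ : ℝ, 0 < r₁ → r₁ ≤ r₂ →
      r₁ ^ (((n : ℝ) - 2) / 2) * v (x₀ + r₁ • e) ≤
        r₂ ^ (((n : ℝ) - 2) / 2) * v (x₀ + r₂ • e) :=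
  moving_sphere_monotonicity_general hn v x₀ hms
end
end

section
/- If the moving sphere inequality holds for all radii at one point, the function blows up at rate |y|^{n-2} at infinity: Let n ≥ 3, let v : ℝⁿ → (0,∞) be continuous, and let x₀ ∈ ℝⁿ. Suppose that for every λ > 0 and every y with |y - x₀| ≥ λ one has v_{x₀,λ}(y) ≤ v(y). Then |y|^{n-2} v(y) → ∞ as |y| → ∞; in particular liminf_{|y|→∞} |y|^{n-2} v(y) = ∞. -/
open Filter Set Metric Topology Asymptotics MeasureTheory Matrix
open scoped Classical ENNReal NNReal

noncomputable section

/-!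
Let `m > 0` be the minimum of `v` on the closed unit ball around `x₀`. For `|y - x₀| ≥ max(λ, λ²)`
the inverted point of `y` in the sphere `∂B_λ(x₀)` lies in that ball, so the moving sphere
inequality gives `|y - x₀|^{n-2} v(y) ≥ λ^{n-2} m`. As `λ` is arbitrary and `n - 2 ≥ 1`, this
tends to infinity, and `|y - x₀|` may be replaced by `|y|` since `|y - x₀| ≤ 2|y|` for large `y`.
-/

open EuclideanGeometry

theorem kelvin_eq_inversion {n : ℕ} (w : En n → ℝ) (x : En n) (l : ℝ) (y : En n) :
    kelvin w x l y = (l / dist y x) ^ (n - 2) * w (inversion x l y) := by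
  simp only [kelvin, inversion_def, dist_eq_norm, div_pow, vsub_eq_sub, vadd_eq_add, add_comm]

theorem dist_pow_mul_kelvin {n : ℕ} (w : En n → ℝ) {x y : En n} (hy : y ≠ x) (l : ℝ) :
    dist y x ^ (n - 2) * kelvin w x l y = l ^ (n - 2) * w (inversion x l y) := by
  have : dist y x ≠ 0 := dist_ne_zero.2 hy
  rw [kelvin_eq_inversion, div_pow]
  field_simp

theorem eventually_pow_mul_le_dist_pow_mul_of_kelvin_le {n : ℕ} {v : En n → ℝ} {x₀ : En n}
    {l m : ℝ} (hl : 0 < l) (hms : ∀ y, l ≤ dist y x₀ → kelvin v x₀ l y ≤ v y)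
    (hm : ∀ z ∈ closedBall x₀ 1, m ≤ v z) :
    ∀ᶠ y in cocompact (En n), l ^ (n - 2) * m ≤ dist y x₀ ^ (n - 2) * v y := by
  filter_upwards [(tendsto_dist_right_cocompact_atTop x₀).eventually_ge_atTop (max l (l ^ 2))]
    with y hy
  have hyl : l ≤ dist y x₀ := (le_max_left _ _).trans hy
  have hyl2 : l ^ 2 ≤ dist y x₀ := (le_max_right _ _).trans hy
  have hdist : 0 < dist y x₀ := hl.trans_le hyl
  have hinv : inversion x₀ l y ∈ closedBall x₀ 1 := by
    rw [mem_closedBall, dist_inversion_center, div_le_one hdist]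
    exact hyl2
  calc l ^ (n - 2) * m ≤ l ^ (n - 2) * v (inversion x₀ l y) := by gcongr; exact hm _ hinv
    _ = dist y x₀ ^ (n - 2) * kelvin v x₀ l y :=
        (dist_pow_mul_kelvin v (dist_pos.1 hdist) l).symm
    _ ≤ dist y x₀ ^ (n - 2) * v y := by gcongr; exact hms y hyl

theorem tendsto_dist_pow_mul_of_kelvin_le {n : ℕ} (hn : 3 ≤ n) {v : En n → ℝ} {x₀ : En n}
    (hms : ∀ l : ℝ, 0 < l → ∀ y, l ≤ dist y x₀ → kelvin v x₀ l y ≤ v y)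
    {m : ℝ} (hm0 : 0 < m) (hm : ∀ z ∈ closedBall x₀ 1, m ≤ v z) :
    Tendsto (fun y => dist y x₀ ^ (n - 2) * v y) (cocompact (En n)) atTop := by
  have hlim : Tendsto (fun l : ℝ => l ^ (n - 2) * m) atTop atTop :=
    (tendsto_pow_atTop (by omega)).atTop_mul_const hm0
  refine tendsto_atTop.2 fun C => ?_
  obtain ⟨l, hlC, hl⟩ := ((hlim.eventually_ge_atTop C).and (eventually_gt_atTop 0)).exists
  filter_upwards [eventually_pow_mul_le_dist_pow_mul_of_kelvin_le hl (hms l hl) hm] with y hy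
  exact hlC.trans hy

theorem tendsto_norm_pow_mul_of_tendsto_dist_pow_mul {E : Type*} [NormedAddCommGroup E]
    [ProperSpace E] {f : E → ℝ} (hf : ∀ y, 0 ≤ f y) (x₀ : E) (k : ℕ)
    (h : Tendsto (fun y => dist y x₀ ^ k * f y) (cocompact E) atTop) :
    Tendsto (fun y => ‖y‖ ^ k * f y) (cocompact E) atTop := by
  refine tendsto_atTop_mono' _ ?_ (h.atTop_div_const (pow_pos two_pos k))
  filter_upwards [tendsto_norm_cocompact_atTop.eventually_ge_atTop ‖x₀‖] with y hy
  have hdist : dist y x₀ ≤ 2 * ‖y‖ := by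
    rw [dist_eq_norm]
    linarith [norm_sub_le y x₀]
  rw [div_le_iff₀ (pow_pos two_pos k)]
  calc dist y x₀ ^ k * f y ≤ (2 * ‖y‖) ^ k * f y := by gcongr; exact hf y
    _ = ‖y‖ ^ k * f y * 2 ^ k := by ring

/-- If the moving sphere inequality holds for all radii at one point, then
`|y|^{n-2} v(y) → ∞` as `|y| → ∞`. -/
theorem moving_sphere_all_radii_blowup {n : ℕ} (hn : 3 ≤ n)
    (v : En n → ℝ) (hvc : Continuous v) (hvpos : ∀ y, 0 < v y) (x₀ : En n)
    (hms : ∀ l : ℝ, 0 < l → ∀ y : En n, l ≤ ‖y - x₀‖ → kelvin v x₀ l y ≤ v y) :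
    Tendsto (fun y : En n => ‖y‖ ^ (n - 2) * v y) (cocompact (En n)) atTop := by
  obtain ⟨z, -, hz⟩ := (isCompact_closedBall x₀ 1).exists_isMinOn
    ⟨x₀, mem_closedBall_self zero_le_one⟩ hvc.continuousOn
  have hms' : ∀ l : ℝ, 0 < l → ∀ y, l ≤ dist y x₀ → kelvin v x₀ l y ≤ v y :=
    fun l hl y hy => hms l hl y (dist_eq_norm y x₀ ▸ hy)
  exact tendsto_norm_pow_mul_of_tendsto_dist_pow_mul (fun y => (hvpos y).le) x₀ (n - 2)
    (tendsto_dist_pow_mul_of_kelvin_le hn hms' (hvpos z) fun _ hw => hz hw)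
end
end
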